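/- Let G be a finite-dimensional Hopf algebra and A a right G-comodule algebra. Consider the iterated crossed product (A ⋊ Ĝ) ⋊ G, where G acts on A ⋊ Ĝ by a ▷ (A ⋊ φ) := A ⋊ (a ⇀ φ) with (a ⇀ φ) = φ₍₁₎⟨φ₍₂₎, a⟩. Then as an algebra (A ⋊ Ĝ) ⋊ G coincides with the two-sided crossed product A ⋊ Ĝ ⋉ G (where G acts on itself from the right via ↼) under the trivial identification of the underlying vector space A ⊗ Ĝ ⊗ G. -/

import Mathlib

/-!
Both products put `A(φ₁ ▷ A')` in the first leg and `φ₂` in front of the second, so they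
differ only in how `ψ` and `g` are combined: `(g₁ ⇀ ψ) ⊗ g₂` against `ψ₁ ⊗ (g ↼ ψ₂)`.
Expanding the two hit actions, both are `ψ₁⟨g₁|ψ₂⟩ ⊗ g₂`, the contraction of the inner legs
of `Δψ ⊗ Δg` by the pairing.
-/

open TensorProduct

namespace TensorProduct

section Pairing

variable {R M N : Type*} [CommSemiring R] [AddCommMonoid M] [Module R M]
  [AddCommMonoid N] [Module R N]

noncomputable def pairInner (p : M →ₗ[R] N →ₗ[R] R) : (N ⊗[R] N) ⊗[R] (M ⊗[R] M) →ₗ[R] N ⊗[R] M :=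
  map LinearMap.id ((TensorProduct.lid R M).toLinearMap ∘ₗ map (lift p.flip) LinearMap.id) ∘ₗ
    map LinearMap.id (TensorProduct.assoc R N M M).symm.toLinearMap ∘ₗ
    (TensorProduct.assoc R N N (M ⊗[R] M)).toLinearMap

@[simp]
theorem pairInner_tmul (p : M →ₗ[R] N →ₗ[R] R) (n₁ n₂ : N) (m₁ m₂ : M) :
    pairInner p ((n₁ ⊗ₜ n₂) ⊗ₜ (m₁ ⊗ₜ m₂)) = p m₁ n₂ • (n₁ ⊗ₜ m₂) := by
  simp [pairInner, smul_tmul']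

theorem pairInner_tmul_left (p : M →ₗ[R] N →ₗ[R] R) (z : N ⊗[R] N) (m₁ m₂ : M) :
    pairInner p (z ⊗ₜ (m₁ ⊗ₜ m₂)) = TensorProduct.rid R N (map LinearMap.id (p m₁) z) ⊗ₜ m₂ := by
  induction z using TensorProduct.induction_on with
  | zero => simp
  | add z₁ z₂ h₁ h₂ => simp only [add_tmul, map_add, h₁, h₂]
  | tmul n₁ n₂ => simp [smul_tmul']

theorem pairInner_tmul_right (p : M →ₗ[R] N →ₗ[R] R) (n₁ n₂ : N) (y : M ⊗[R] M) :
    pairInner p ((n₁ ⊗ₜ n₂) ⊗ₜ y) =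
      n₁ ⊗ₜ TensorProduct.lid R M (map (p.flip n₂) LinearMap.id y) := by
  induction y using TensorProduct.induction_on with
  | zero => simp
  | add y₁ y₂ h₁ h₂ => simp only [tmul_add, map_add, h₁, h₂]
  | tmul m₁ m₂ => simp

theorem map_id_eq_pairInner (p : M →ₗ[R] N →ₗ[R] R) (k : N →ₗ[R] M) (y : M ⊗[R] M)
    (hk : ∀ n, k n = TensorProduct.lid R M (map (p.flip n) LinearMap.id y)) (z : N ⊗[R] N) :
    map LinearMap.id k z = pairInner p (z ⊗ₜ y) := by
  induction z using TensorProduct.induction_on with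
  | zero => simp
  | add z₁ z₂ h₁ h₂ => rw [map_add, h₁, h₂, add_tmul, map_add]
  | tmul n₁ n₂ => rw [map_tmul, LinearMap.id_apply, hk, pairInner_tmul_right]

theorem map_eq_pairInner (p : M →ₗ[R] N →ₗ[R] R) (f : M →ₗ[R] N) (z : N ⊗[R] N)
    (hf : ∀ m, f m = TensorProduct.rid R N (map LinearMap.id (p m) z)) (y : M ⊗[R] M) :
    map f LinearMap.id y = pairInner p (z ⊗ₜ y) := by
  induction y using TensorProduct.induction_on with
  | zero => simp
  | add y₁ y₂ h₁ h₂ => rw [map_add, h₁, h₂, tmul_add, map_add]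
  | tmul m₁ m₂ => rw [map_tmul, LinearMap.id_apply, hf, pairInner_tmul_left]

end Pairing

section Naturality

variable {R B₁ B₂ X X' Y Y' P B' Q : Type*} [CommSemiring R]
  [AddCommMonoid B₁] [Module R B₁] [AddCommMonoid B₂] [Module R B₂]
  [AddCommMonoid X] [Module R X] [AddCommMonoid X'] [Module R X']
  [AddCommMonoid Y] [Module R Y] [AddCommMonoid Y'] [Module R Y']
  [AddCommMonoid P] [Module R P] [AddCommMonoid B'] [Module R B'] [AddCommMonoid Q] [Module R Q]

theorem map_map_assoc_tmul_map_left (f : B₁ →ₗ[R] P) (m : B₂ ⊗[R] X' →ₗ[R] B') (v : Y →ₗ[R] Q)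
    (u : X →ₗ[R] X') (b : B₁ ⊗[R] B₂) (y : X ⊗[R] Y) :
    map f (map m v) (map LinearMap.id (TensorProduct.assoc R B₂ X' Y).symm.toLinearMap
        (TensorProduct.assoc R B₁ B₂ (X' ⊗[R] Y) (b ⊗ₜ map u LinearMap.id y))) =
      map f (map (m ∘ₗ map LinearMap.id u) v)
        (map LinearMap.id (TensorProduct.assoc R B₂ X Y).symm.toLinearMap
          (TensorProduct.assoc R B₁ B₂ (X ⊗[R] Y) (b ⊗ₜ y))) := by
  induction b using TensorProduct.induction_on generalizing y with
  | zero => simp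
  | add b₁ b₂ h₁ h₂ => simp only [add_tmul, map_add, h₁, h₂]
  | tmul b₁ b₂ =>
    induction y using TensorProduct.induction_on with
    | zero => simp
    | add y₁ y₂ h₁ h₂ => simp only [tmul_add, map_add, h₁, h₂]
    | tmul x₀ y₀ => simp

theorem map_map_assoc_tmul_map_right (f : B₁ →ₗ[R] P) (m : B₂ ⊗[R] X →ₗ[R] B') (v : Y' →ₗ[R] Q)
    (w : Y →ₗ[R] Y') (b : B₁ ⊗[R] B₂) (y : X ⊗[R] Y) :
    map f (map m v) (map LinearMap.id (TensorProduct.assoc R B₂ X Y').symm.toLinearMap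
        (TensorProduct.assoc R B₁ B₂ (X ⊗[R] Y') (b ⊗ₜ map LinearMap.id w y))) =
      map f (map m (v ∘ₗ w))
        (map LinearMap.id (TensorProduct.assoc R B₂ X Y).symm.toLinearMap
          (TensorProduct.assoc R B₁ B₂ (X ⊗[R] Y) (b ⊗ₜ y))) := by
  induction b using TensorProduct.induction_on generalizing y with
  | zero => simp
  | add b₁ b₂ h₁ h₂ => simp only [add_tmul, map_add, h₁, h₂]
  | tmul b₁ b₂ =>
    induction y using TensorProduct.induction_on with
    | zero => simp
    | add y₁ y₂ h₁ h₂ => simp only [tmul_add, map_add, h₁, h₂]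
    | tmul x₀ y₀ => simp

end Naturality

end TensorProduct

open CoalgebraStruct (comul) in
theorem map_flip_comul_eq_map_flip_comul {R C D : Type*} [CommSemiring R]
    [AddCommMonoid C] [Module R C] [CoalgebraStruct R C]
    [AddCommMonoid D] [Module R D] [CoalgebraStruct R D] (p : C →ₗ[R] D →ₗ[R] R)
    (rh : C →ₗ[R] D →ₗ[R] D)
    (h_rh : ∀ c d, rh c d = TensorProduct.rid R D (map LinearMap.id (p c) (comul d)))
    (lh : D →ₗ[R] C →ₗ[R] C)
    (h_lh : ∀ d c, lh d c = TensorProduct.lid R C (map (p.flip d) LinearMap.id (comul c)))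
    (d : D) (c : C) :
    map (rh.flip d) LinearMap.id (comul c) = map LinearMap.id (lh.flip c) (comul d) := by
  rw [map_eq_pairInner p _ (comul d) (fun c' => h_rh c' d),
    map_id_eq_pairInner p _ (comul c) (fun d' => h_lh d' c)]

theorem statement8
    (G H A : Type*) [Ring G] [HopfAlgebra ℂ G] [Ring H] [HopfAlgebra ℂ H]
    [Ring A] [Algebra ℂ A]
    -- the Hopf pairing `⟨·|·⟩ : G ⊗ Ĝ → ℂ`
    (p : G →ₗ[ℂ] H →ₗ[ℂ] ℂ)
    -- the left Hopf module action `▷` of `Ĝ = H` on `A`, dual to the coaction on `A`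
    (act : H →ₗ[ℂ] A →ₗ[ℂ] A)
    -- `⇀` : `rh a ψ = a ⇀ ψ = ψ₍₁₎⟨ψ₍₂₎|a⟩`
    (rh : G →ₗ[ℂ] H →ₗ[ℂ] H)
    (h_rh : ∀ (a : G) (ψ : H),
      rh a ψ =
        (TensorProduct.rid ℂ H)
          (TensorProduct.map LinearMap.id (p a) (Coalgebra.comul (R := ℂ) ψ)))
    -- `↼` : `lh ψ a = a ↼ ψ = ⟨a₍₁₎|ψ⟩a₍₂₎`
    (lh : H →ₗ[ℂ] G →ₗ[ℂ] G)
    (h_lh : ∀ (ψ : H) (a : G),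
      lh ψ a =
        (TensorProduct.lid ℂ G)
          (TensorProduct.map (p.flip ψ) LinearMap.id (Coalgebra.comul (R := ℂ) a)))
    -- `mul1` : the iterated crossed product `(A ⋊ Ĝ) ⋊ G`, with
    -- `((A ⋊ φ) ⋊ g)((A' ⋊ ψ) ⋊ g') = (A(φ₁ ▷ A') ⋊ φ₂·(g₁ ⇀ ψ)) ⋊ g₂g'`
    (mul1 : (A ⊗[ℂ] H) ⊗[ℂ] G →ₗ[ℂ] (A ⊗[ℂ] H) ⊗[ℂ] G →ₗ[ℂ] (A ⊗[ℂ] H) ⊗[ℂ] G)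
    (hmul1 : ∀ (a a' : A) (φ ψ : H) (g g' : G),
      mul1 ((a ⊗ₜ[ℂ] φ) ⊗ₜ[ℂ] g) ((a' ⊗ₜ[ℂ] ψ) ⊗ₜ[ℂ] g') =
        (TensorProduct.assoc ℂ A H G).symm
          (TensorProduct.map (LinearMap.mulLeft ℂ a ∘ₗ act.flip a')
            (TensorProduct.map
              (LinearMap.mul' ℂ H ∘ₗ TensorProduct.map LinearMap.id (rh.flip ψ))
              (LinearMap.mulRight ℂ g'))
            (TensorProduct.map LinearMap.id
              (TensorProduct.assoc ℂ H G G).symm.toLinearMap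
              ((TensorProduct.assoc ℂ H H (G ⊗[ℂ] G))
                ((Coalgebra.comul (R := ℂ) φ) ⊗ₜ[ℂ] (Coalgebra.comul (R := ℂ) g))))))
    -- `mul2` : the two-sided crossed product `A ⋊ Ĝ ⋉ G`, with
    -- `(A ⋊ φ ⋉ g)(A' ⋊ ψ ⋉ g') = A(φ₁ ▷ A') ⋊ φ₂ψ₁ ⋉ (g ↼ ψ₂)g'`
    (mul2 : (A ⊗[ℂ] H) ⊗[ℂ] G →ₗ[ℂ] (A ⊗[ℂ] H) ⊗[ℂ] G →ₗ[ℂ] (A ⊗[ℂ] H) ⊗[ℂ] G)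
    (hmul2 : ∀ (a a' : A) (φ ψ : H) (g g' : G),
      mul2 ((a ⊗ₜ[ℂ] φ) ⊗ₜ[ℂ] g) ((a' ⊗ₜ[ℂ] ψ) ⊗ₜ[ℂ] g') =
        (TensorProduct.assoc ℂ A H G).symm
          (TensorProduct.map (LinearMap.mulLeft ℂ a ∘ₗ act.flip a')
            (TensorProduct.map (LinearMap.mul' ℂ H)
              (LinearMap.mulRight ℂ g' ∘ₗ lh.flip g))
            (TensorProduct.map LinearMap.id
              (TensorProduct.assoc ℂ H H H).symm.toLinearMap
              ((TensorProduct.assoc ℂ H H (H ⊗[ℂ] H))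
                ((Coalgebra.comul (R := ℂ) φ) ⊗ₜ[ℂ] (Coalgebra.comul (R := ℂ) ψ)))))) :
    mul1 = mul2 := by
  refine TensorProduct.ext_threefold fun a φ g => TensorProduct.ext_threefold fun a' ψ g' => ?_
  rw [hmul1, hmul2, ← map_map_assoc_tmul_map_left,
    map_flip_comul_eq_map_flip_comul p rh h_rh lh h_lh, map_map_assoc_tmul_map_right]
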